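/- arXiv:math/9809042 — 4 statements merged into one kernel-verified Lean document; each statement's English description precedes it below -/
import Mathlib

section
/- For all integers N ≥ 5, d, v, w with w ≥ 2^(N-1) - 1, v ≥ 2w + 1, and d ≥ 2v + 1, we have ⌈(d-1)/N⌉ - ⌊(d-v-1)/(v-w)⌋ - ⌊(v-2)/(N-1)⌋ ≥ 3. -/
/-!
Bound each rounding by the exact quotient and prove the rational inequality. Since `2w + 1 ≤ v`
we have `v - w ≥ (v + 1) / 2`, so the middle quotient is at most `2(d - v - 1)/(v + 1)`. The
result is affine in `d` with slope `1/N - 2/(v + 1) ≥ 0`, so it suffices to take `d = 2v + 1`,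
where it equals `2v/N - 2v/(v + 1) - (v - 2)/(N - 1) > 2v/N - (v - 2)/(N - 1) - 2`. This is
at least `3` once `v (N - 2) ≥ 5N² - 7N`, which follows from `v ≥ 2^N - 1`.
-/

theorem five_mul_sq_sub_le_two_pow_sub_one_mul {N : ℕ} (hN : 5 ≤ N) :
    5 * (N : ℤ) ^ 2 - 7 * N ≤ (2 ^ N - 1) * (N - 2) := by
  induction N, hN using Nat.le_induction with
  | base => norm_num
  | succ n hn ih =>
    have h32 : (32 : ℤ) ≤ 2 ^ n := by
      calc (32 : ℤ) = 2 ^ 5 := by norm_num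
        _ ≤ 2 ^ n := pow_le_pow_right₀ (by norm_num) hn
    have hn5 : (5 : ℤ) ≤ n := by exact_mod_cast hn
    push_cast
    rw [pow_succ (2 : ℤ) n]
    nlinarith [mul_nonneg (by linarith : (0 : ℤ) ≤ 2 ^ n - 32) (by linarith : (0 : ℤ) ≤ n)]

theorem three_le_div_sub_div_sub_div {K : Type*} [Field K] [LinearOrder K]
    [IsStrictOrderedRing K] {n v w d : K} (hn : 2 < n)
    (hvn : 5 * n ^ 2 - 7 * n ≤ v * (n - 2)) (hw : 2 * w + 1 ≤ v) (hd : 2 * v + 1 ≤ d) :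
    3 ≤ (d - 1) / n - (d - v - 1) / (v - w) - (v - 2) / (n - 1) := by
  have hv : 5 * n < v := by nlinarith
  have hvw : (v + 1) / 2 ≤ v - w := by linarith
  have hslope : 0 ≤ 1 / n - 2 / (v + 1) := by
    rw [sub_nonneg, div_le_div_iff₀ (by linarith) (by linarith)]
    linarith
  have hshift : (d - v - 1) / (v - w) ≤ 2 * (d - v - 1) / (v + 1) := by
    calc (d - v - 1) / (v - w) ≤ (d - v - 1) / ((v + 1) / 2) :=
          div_le_div_of_nonneg_left (by linarith) (by linarith) hvw
      _ = 2 * (d - v - 1) / (v + 1) := by field_simp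
  have hmono : 2 * v / n - 2 * v / (v + 1) ≤ (d - 1) / n - 2 * (d - v - 1) / (v + 1) := by
    have hdiff : (d - 1) / n - 2 * (d - v - 1) / (v + 1) - (2 * v / n - 2 * v / (v + 1))
        = (d - 2 * v - 1) * (1 / n - 2 / (v + 1)) := by
      field_simp
      ring
    rw [← sub_nonneg, hdiff]
    exact mul_nonneg (by linarith) hslope
  have hfrac : 2 * v / (v + 1) ≤ 2 := by
    rw [div_le_iff₀ (by linarith)]
    linarith
  have hdiag : 5 ≤ 2 * v / n - (v - 2) / (n - 1) := by
    rw [div_sub_div _ _ (by linarith) (by linarith), le_div_iff₀ (by nlinarith)]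
    nlinarith
  linarith

theorem le_ceil_sub_floor_sub_floor {K : Type*} [CommRing K] [LinearOrder K]
    [IsStrictOrderedRing K] [FloorRing K] {k : ℤ} {x y z : K} (h : k ≤ x - y - z) : k ≤ ⌈x⌉ - ⌊y⌋ - ⌊z⌋ := by
  have := Int.le_ceil x
  have := Int.floor_le y
  have := Int.floor_le z
  exact_mod_cast (by linarith : (k : K) ≤ ⌈x⌉ - ⌊y⌋ - ⌊z⌋)

theorem stmt_0 (N : ℕ) (d v w : ℤ) (hN : 5 ≤ N)
    (hw : (2 : ℤ) ^ (N - 1) - 1 ≤ w) (hv : 2 * w + 1 ≤ v) (hd : 2 * v + 1 ≤ d) :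
    ⌈((d : ℚ) - 1) / N⌉ - ⌊((d : ℚ) - v - 1) / (v - w)⌋ - ⌊((v : ℚ) - 2) / (N - 1)⌋ ≥ 3 := by
  have hpow : (2 : ℤ) ^ N = 2 * 2 ^ (N - 1) := by
    rw [← pow_succ']
    congr 1
    omega
  have hvN : 5 * (N : ℤ) ^ 2 - 7 * N ≤ v * (N - 2) :=
    (five_mul_sq_sub_le_two_pow_sub_one_mul hN).trans
      (mul_le_mul_of_nonneg_right (by linarith) (by omega))
  refine le_ceil_sub_floor_sub_floor (three_le_div_sub_div_sub_div ?_ ?_ ?_ ?_)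
  · exact_mod_cast (by omega : 2 < N)
  · exact_mod_cast hvN
  · exact_mod_cast hv
  · exact_mod_cast hd
end

section
/- Let N = 4 and let d, v, w be integers with w ≥ 7, v ≥ 2w + 1, d ≥ 2v + 1, and suppose d = v + ℓ₁(v-w) where ℓ₁ = ⌊(d-v-1)/(v-w)⌋ + 1. Then ⌈(d-1)/4⌉ - ⌊(d-v-1)/(v-w)⌋ - ⌊(v-2)/3⌋ ≥ 3. -/
theorem stmt_2 (d v w : ℤ) (hw : 7 ≤ w) (hv : 2 * w + 1 ≤ v) (hd : 2 * v + 1 ≤ d)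
    (ℓ₁ : ℤ) (hℓ₁ : ℓ₁ = ⌊((d : ℚ) - v - 1) / (v - w)⌋ + 1)
    (hrel : d = v + ℓ₁ * (v - w)) :
    ⌈((d : ℚ) - 1) / 4⌉ - ⌊((d : ℚ) - v - 1) / (v - w)⌋ - ⌊((v : ℚ) - 2) / 3⌋ ≥ 3 := by
  have hf : ⌊((d : ℚ) - v - 1) / (v - w)⌋ = ℓ₁ - 1 := by omega
  set a := ⌈((d : ℚ) - 1) / 4⌉ with ha_def
  set b := ⌊((v : ℚ) - 2) / 3⌋ with hb_def
  have ha : (d : ℤ) - 1 ≤ 4 * a := by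
    have h := Int.le_ceil (((d : ℚ) - 1) / 4)
    rw [div_le_iff₀ (by norm_num : (0:ℚ) < 4)] at h
    have : ((d : ℚ) - 1) ≤ 4 * (a : ℚ) := by linarith
    exact_mod_cast this
  have hb : 3 * b ≤ (v : ℤ) - 2 := by
    have h := Int.floor_le (((v : ℚ) - 2) / 3)
    rw [le_div_iff₀ (by norm_num : (0:ℚ) < 3)] at h
    have : (b : ℚ) * 3 ≤ (v : ℚ) - 2 := h
    have : 3 * (b : ℚ) ≤ (v : ℚ) - 2 := by linarith
    exact_mod_cast this
  have hm : 8 ≤ v - w := by omega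
  have hl2 : 2 ≤ ℓ₁ := by
    by_contra h
    push_neg at h
    have h1 : ℓ₁ ≤ 1 := by omega
    have := mul_le_mul_of_nonneg_right h1 (by omega : (0:ℤ) ≤ v - w)
    omega
  rw [hf]
  rcases eq_or_lt_of_le hl2 with h2 | h3
  · -- ℓ₁ = 2 : everything is linear
    rw [← h2] at hrel
    omega
  · -- ℓ₁ ≥ 3
    have h3' : 3 ≤ ℓ₁ := h3
    have key : 4 * ℓ₁ + 4 * b + 6 ≤ d := by
      nlinarith [mul_nonneg (by omega : (0:ℤ) ≤ ℓ₁ - 3) (by omega : (0:ℤ) ≤ v - w - 4)]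
    omega
end

section
/- Let N = 3 and let d, v, w be integers with w ≥ 3, v ≥ 2w + 1, d ≥ 25, d ≥ 2v + 1, and suppose d = v + ℓ₁(v-w) where ℓ₁ = ⌊(d-v-1)/(v-w)⌋ + 1. Then ⌈(d-1)/3⌉ - ⌊(d-v-1)/(v-w)⌋ - ⌊(v-2)/2⌋ ≥ 3. -/
theorem stmt_3 (d v w : ℤ) (hw : 3 ≤ w) (hv : 2 * w + 1 ≤ v) (hd25 : 25 ≤ d)
    (hd : 2 * v + 1 ≤ d)
    (ℓ₁ : ℤ) (hℓ₁ : ℓ₁ = ⌊((d : ℚ) - v - 1) / (v - w)⌋ + 1)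
    (hrel : d = v + ℓ₁ * (v - w)) :
    ⌈((d : ℚ) - 1) / 3⌉ - ⌊((d : ℚ) - v - 1) / (v - w)⌋ - ⌊((v : ℚ) - 2) / 2⌋ ≥ 3 := by
  have hm4 : 4 ≤ v - w := by omega
  have hprod : ℓ₁ * (v - w) = d - v := by linarith
  have hl2 : 2 ≤ ℓ₁ := by
    by_contra hc
    push_neg at hc
    have h1 : ℓ₁ ≤ 1 := by omega
    have := mul_le_mul_of_nonneg_right h1 (by omega : (0:ℤ) ≤ v - w)
    rw [one_mul] at this
    omega
  have hfl : ⌊((d : ℚ) - v - 1) / (v - w)⌋ = ℓ₁ - 1 := by omega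
  have h2 : ⌊((v : ℚ) - 2) / 2⌋ = (v - 2) / 2 := by
    rw [show ((v:ℚ) - 2) / 2 = ((v - 2 : ℤ) : ℚ) / ((2 : ℕ) : ℚ) by push_cast; ring,
      Rat.floor_intCast_div_natCast]
    norm_num
  have h3 : ⌈((d : ℚ) - 1) / 3⌉ = -((1 - d) / 3) := by
    rw [show ((d:ℚ) - 1) / 3 = -(((1 - d : ℤ) : ℚ) / ((3 : ℕ) : ℚ)) by push_cast; ring,
      Int.ceil_neg, Rat.floor_intCast_div_natCast]
    norm_num
  rw [hfl, h2, h3]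
  rcases le_or_gt (v + 8) (ℓ₁ * (2 * (v - w) - 6)) with h | h
  · have key : ℓ₁ * (2 * (v - w) - 6) = 2 * (d - v) - 6 * ℓ₁ := by linear_combination 2 * hprod
    omega
  · have h2' : 2 * (2 * (v - w) - 6) ≤ ℓ₁ * (2 * (v - w) - 6) :=
      mul_le_mul_of_nonneg_right hl2 (by omega)
    have hw8 : w ≤ 8 := by omega
    have hvu : 3 * (v - w) ≤ w + 19 := by omega
    have hvu2 : v ≤ 2 * w + 7 := by omega
    interval_cases w <;> interval_cases v <;> omega
end

section
/- Let S be a finite set of d points in the projective plane such that every line meeting S in at least 2 points meets it in exactly v points, with v ≥ 4 and d ≥ 2v+1. Fix P ∈ S. Then there exist at most ⌈(d-1)/2⌉ - 1 lines whose union contains S \ {P} and avoids P. -/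
attribute [local instance] Classical.propDecidable

open scoped LinearAlgebra.Projectivization
open Projectivization Submodule Module

section Aux
variable {K : Type*} [Field K]

lemma line_rank_aux11 (P Q : ℙ K (Fin 3 → K)) (h : P ≠ Q) :
    finrank K ↥(P.submodule ⊔ Q.submodule) = 2 := by
  have hinf : P.submodule ⊓ Q.submodule = ⊥ := by
    by_contra hne
    have h1 : finrank K ↥(P.submodule ⊓ Q.submodule) ≠ 0 := by
      simpa [Submodule.finrank_eq_zero] using hne
    have hle : P.submodule ⊓ Q.submodule ≤ P.submodule := inf_le_left
    have e1 := Submodule.eq_of_le_of_finrank_le hle (by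
      rw [P.finrank_submodule]; omega)
    have hle' : P.submodule ⊓ Q.submodule ≤ Q.submodule := inf_le_right
    have e2 := Submodule.eq_of_le_of_finrank_le hle' (by
      rw [Q.finrank_submodule]
      have := Submodule.finrank_mono hle
      rw [P.finrank_submodule] at this; omega)
    exact h (submodule_injective (by rw [← e1, e2]))
  have := Submodule.finrank_sup_add_finrank_inf_eq P.submodule Q.submodule
  rw [hinf] at this
  simp [P.finrank_submodule, Q.finrank_submodule, finrank_bot] at this
  omega

lemma line_unique_aux11 {W W' : Submodule K (Fin 3 → K)}
    (hW : finrank K ↥W = 2) (hW' : finrank K ↥W' = 2)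
    {P Q : ℙ K (Fin 3 → K)} (h : P ≠ Q)
    (h1 : P.submodule ≤ W) (h2 : Q.submodule ≤ W)
    (h1' : P.submodule ≤ W') (h2' : Q.submodule ≤ W') : W = W' := by
  have hsup : finrank K ↥(P.submodule ⊔ Q.submodule) = 2 := line_rank_aux11 P Q h
  have e1 : P.submodule ⊔ Q.submodule = W :=
    Submodule.eq_of_le_of_finrank_le (sup_le h1 h2) (by omega)
  have e2 : P.submodule ⊔ Q.submodule = W' :=
    Submodule.eq_of_le_of_finrank_le (sup_le h1' h2') (by omega)
  rw [← e1, e2]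

end Aux

theorem stmt_11 {K : Type*} [Field K] [IsAlgClosed K]
    (S : Finset (ℙ K (Fin 3 → K))) (d v : ℕ) (hd : S.card = d)
    (hline : ∀ W : Submodule K (Fin 3 → K), Module.finrank K ↥W = 2 →
      2 ≤ (S.filter fun q => q.submodule ≤ W).card →
      (S.filter fun q => q.submodule ≤ W).card = v)
    (hv : 4 ≤ v) (hdv : 2 * v + 1 ≤ d) (P : ℙ K (Fin 3 → K)) (hP : P ∈ S) :
    ∃ L : Finset (Submodule K (Fin 3 → K)),
      (L.card : ℤ) ≤ ⌈((d : ℚ) - 1) / 2⌉ - 1 ∧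
      (∀ W ∈ L, Module.finrank K ↥W = 2) ∧
      (∀ Q ∈ S, Q ≠ P → ∃ W ∈ L, Q.submodule ≤ W) ∧
      (∀ W ∈ L, ¬ P.submodule ≤ W) := by
  classical
  -- choose A ∈ S, A ≠ P
  obtain ⟨A, hA, hAP⟩ : ∃ A ∈ S, A ≠ P := by
    have h2 : 2 ≤ S.card := by omega
    obtain ⟨A, hA, B, hB, hAB⟩ := Finset.one_lt_card.mp h2
    by_cases h : A = P
    · subst h; exact ⟨B, hB, fun hBP => hAB hBP.symm⟩
    · exact ⟨A, hA, h⟩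
  set W₀ : Submodule K (Fin 3 → K) := A.submodule ⊔ P.submodule with hW₀def
  have hW₀ : finrank K ↥W₀ = 2 := line_rank_aux11 A P hAP
  have hAW₀ : A.submodule ≤ W₀ := le_sup_left
  have hPW₀ : P.submodule ≤ W₀ := le_sup_right
  set SAP := S.filter (fun q => q.submodule ≤ W₀) with hSAPdef
  have hSAPcard : SAP.card = v := by
    apply hline W₀ hW₀
    have : {A, P} ⊆ SAP := by
      intro x hx
      simp only [Finset.mem_insert, Finset.mem_singleton] at hx
      rcases hx with rfl | rfl
      · exact Finset.mem_filter.mpr ⟨hA, hAW₀⟩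
      · exact Finset.mem_filter.mpr ⟨hP, hPW₀⟩
    calc 2 = ({A, P} : Finset _).card := by rw [Finset.card_insert_of_notMem (by simpa using hAP), Finset.card_singleton]
    _ ≤ SAP.card := Finset.card_le_card this
  -- T = points off the line AP
  set T := S.filter (fun q => ¬ q.submodule ≤ W₀) with hTdef
  have hTcard : T.card = d - v := by
    have hsplit : SAP.card + T.card = d := by
      rw [hSAPdef, hTdef, ← hd]
      exact Finset.card_filter_add_card_filter_not _
    omega
  have hvd : v < d := by omega
  obtain ⟨B, hBT⟩ : ∃ B, B ∈ T := by
    apply Finset.card_pos.mp; omega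
  have hBS : B ∈ S := (Finset.mem_filter.mp hBT).1
  have hBW₀ : ¬ B.submodule ≤ W₀ := (Finset.mem_filter.mp hBT).2
  -- lines through A to points off AP
  set f : ℙ K (Fin 3 → K) → Submodule K (Fin 3 → K) :=
    fun Q => A.submodule ⊔ Q.submodule with hfdef
  set L₁ := T.image f with hL₁def
  set L₂ := (SAP \ {A, P}).image (fun R => R.submodule ⊔ B.submodule) with hL₂def
  -- generic facts
  have hneA : ∀ Q ∈ T, A ≠ Q := by
    intro Q hQ h
    exact (Finset.mem_filter.mp hQ).2 (h ▸ hAW₀)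
  have hrank1 : ∀ W ∈ L₁, finrank K ↥W = 2 := by
    intro W hW
    obtain ⟨Q, hQ, rfl⟩ := Finset.mem_image.mp hW
    exact line_rank_aux11 A Q (hneA Q hQ)
  have hrank2 : ∀ W ∈ L₂, finrank K ↥W = 2 := by
    intro W hW
    obtain ⟨R, hR, rfl⟩ := Finset.mem_image.mp hW
    have hRW₀ : R.submodule ≤ W₀ := (Finset.mem_filter.mp (Finset.mem_sdiff.mp hR).1).2
    exact line_rank_aux11 R B (by rintro rfl; exact hBW₀ hRW₀)
  have hPnot1 : ∀ W ∈ L₁, ¬ P.submodule ≤ W := by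
    intro W hW hPle
    obtain ⟨Q, hQ, rfl⟩ := Finset.mem_image.mp hW
    have : f Q = W₀ :=
      line_unique_aux11 (hrank1 _ hW) hW₀ hAP le_sup_left hPle hAW₀ hPW₀
    exact (Finset.mem_filter.mp hQ).2 (this ▸ (le_sup_right : Q.submodule ≤ f Q))
  have hPnot2 : ∀ W ∈ L₂, ¬ P.submodule ≤ W := by
    intro W hW hPle
    obtain ⟨R, hR, rfl⟩ := Finset.mem_image.mp hW
    obtain ⟨hR1, hR2⟩ := Finset.mem_sdiff.mp hR
    have hRW₀ : R.submodule ≤ W₀ := (Finset.mem_filter.mp hR1).2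
    have hRP : R ≠ P := by
      intro h; exact hR2 (by simp [h])
    have : R.submodule ⊔ B.submodule = W₀ :=
      line_unique_aux11 (hrank2 _ hW) hW₀ hRP le_sup_left hPle hRW₀ hPW₀
    exact hBW₀ (this ▸ (le_sup_right : B.submodule ≤ _))
  refine ⟨L₁ ∪ L₂, ?_, ?_, ?_, ?_⟩
  · -- cardinality
    -- fibers of f on T all have card v - 1
    have hfiber : ∀ W ∈ L₁, (T.filter (fun q => f q = W)).card = v - 1 := by
      intro W hW
      obtain ⟨Q₀, hQ₀, rfl⟩ := Finset.mem_image.mp hW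
      have hQ₀W₀ : ¬ Q₀.submodule ≤ W₀ := (Finset.mem_filter.mp hQ₀).2
      have hWne : f Q₀ ≠ W₀ := by
        intro h
        exact hQ₀W₀ (h ▸ (le_sup_right : Q₀.submodule ≤ f Q₀))
      have hrk : finrank K ↥(f Q₀) = 2 := hrank1 _ hW
      have hFcard : (S.filter (fun q => q.submodule ≤ f Q₀)).card = v := by
        apply hline _ hrk
        have hsub : {A, Q₀} ⊆ S.filter (fun q => q.submodule ≤ f Q₀) := by
          intro x hx
          simp only [Finset.mem_insert, Finset.mem_singleton] at hx
          rcases hx with rfl | rfl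
          · exact Finset.mem_filter.mpr ⟨hA, le_sup_left⟩
          · exact Finset.mem_filter.mpr ⟨(Finset.mem_filter.mp hQ₀).1, le_sup_right⟩
        calc 2 = ({A, Q₀} : Finset _).card := by
              rw [Finset.card_insert_of_notMem (by simpa using hneA Q₀ hQ₀), Finset.card_singleton]
        _ ≤ _ := Finset.card_le_card hsub
      have hset : T.filter (fun q => f q = f Q₀)
          = (S.filter (fun q => q.submodule ≤ f Q₀)).erase A := by
        ext Q
        simp only [Finset.mem_filter, Finset.mem_erase, hTdef]
        constructor
        · rintro ⟨⟨hQS, hQW₀⟩, hfQ⟩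
          refine ⟨fun h => hQW₀ (h ▸ hAW₀), hQS, hfQ ▸ le_sup_right⟩
        · rintro ⟨hQA, hQS, hQle⟩
          have hQW₀ : ¬ Q.submodule ≤ W₀ := by
            intro h
            exact hWne (line_unique_aux11 hrk hW₀ (Ne.symm hQA) le_sup_left hQle hAW₀ h)
          refine ⟨⟨hQS, hQW₀⟩, ?_⟩
          exact line_unique_aux11 (line_rank_aux11 A Q (Ne.symm hQA)) hrk (Ne.symm hQA)
            le_sup_left le_sup_right le_sup_left hQle
      rw [hset, Finset.card_erase_of_mem
        (Finset.mem_filter.mpr ⟨hA, (le_sup_left : A.submodule ≤ f Q₀)⟩), hFcard]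
    have hsum := Finset.card_eq_sum_card_image f T
    rw [← hL₁def] at hsum
    have hTsum : T.card = L₁.card * (v - 1) := by
      rw [hsum, Finset.sum_congr rfl hfiber, Finset.sum_const, smul_eq_mul]
    set m := L₁.card with hmdef
    have hmv : m * (v - 1) = d - v := by rw [← hTsum]; exact hTcard
    have hdm : d = m * (v - 1) + v := by omega
    have hm2 : 2 ≤ m := by
      by_contra h
      have hm1 : m ≤ 1 := by omega
      have : m * (v - 1) ≤ 1 * (v - 1) := Nat.mul_le_mul_right _ hm1
      omega
    have hL₂card : L₂.card ≤ v - 2 := by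
      have hsub : ({A, P} : Finset _) ⊆ SAP := by
        intro x hx
        simp only [Finset.mem_insert, Finset.mem_singleton] at hx
        rcases hx with rfl | rfl
        · exact Finset.mem_filter.mpr ⟨hA, hAW₀⟩
        · exact Finset.mem_filter.mpr ⟨hP, hPW₀⟩
      calc L₂.card ≤ (SAP \ {A, P}).card := Finset.card_image_le
        _ = v - 2 := by
            rw [Finset.card_sdiff_of_subset hsub, hSAPcard,
              Finset.card_insert_of_notMem (by simpa using hAP), Finset.card_singleton]
    have hcard : (L₁ ∪ L₂).card ≤ m + (v - 2) :=
      le_trans (Finset.card_union_le _ _) (by omega)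
    -- arithmetic
    have h1 : (m : ℤ) * ((v : ℤ) - 1) = (d : ℤ) - (v : ℤ) := by
      have h2 := hmv
      zify [show 1 ≤ v by omega, show v ≤ d by omega] at h2
      exact h2
    have hm' : (2 : ℤ) ≤ m := by exact_mod_cast hm2
    have hv' : (4 : ℤ) ≤ v := by exact_mod_cast hv
    have hkey : 2 * (m : ℤ) + 2 * v - 3 ≤ (d : ℤ) - 1 := by
      nlinarith only [h1, hm', hv',
        mul_nonneg (by linarith only [hm'] : (0:ℤ) ≤ (m:ℤ) - 2)
          (by linarith only [hv'] : (0:ℤ) ≤ (v:ℤ) - 3)]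
    have hceil : (m + v - 2 : ℤ) < ⌈((d : ℚ) - 1) / 2⌉ := by
      rw [Int.lt_ceil, lt_div_iff₀ (by norm_num : (0:ℚ) < 2)]
      have : ((2 * (m : ℤ) + 2 * v - 3 : ℤ) : ℚ) ≤ ((d : ℤ) - 1 : ℤ) := by exact_mod_cast hkey
      push_cast at this ⊢
      linarith only [this]
    calc ((L₁ ∪ L₂).card : ℤ) ≤ (m : ℤ) + (v - 2 : ℕ) := by exact_mod_cast hcard
      _ = (m + v - 2 : ℤ) := by push_cast [Nat.cast_sub (by omega : 2 ≤ v)]; ring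
      _ ≤ ⌈((d : ℚ) - 1) / 2⌉ - 1 := by omega
  · intro W hW
    rcases Finset.mem_union.mp hW with h | h
    · exact hrank1 W h
    · exact hrank2 W h
  · -- covering
    intro Q hQS hQP
    by_cases hQW₀ : Q.submodule ≤ W₀
    · by_cases hQA : Q = A
      · exact ⟨f B, Finset.mem_union_left _ (Finset.mem_image_of_mem f hBT),
          hQA ▸ (le_sup_left : A.submodule ≤ f B)⟩
      · refine ⟨Q.submodule ⊔ B.submodule, Finset.mem_union_right _ ?_, le_sup_left⟩
        apply Finset.mem_image_of_mem
        exact Finset.mem_sdiff.mpr ⟨Finset.mem_filter.mpr ⟨hQS, hQW₀⟩, by simp [hQA, hQP]⟩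
    · exact ⟨f Q, Finset.mem_union_left _
        (Finset.mem_image_of_mem f (Finset.mem_filter.mpr ⟨hQS, hQW₀⟩)), le_sup_right⟩
  · intro W hW
    rcases Finset.mem_union.mp hW with h | h
    · exact hPnot1 W h
    · exact hPnot2 W h
end
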